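/- arXiv:1503.03923 — 3 statements merged into one kernel-verified Lean document; each statement's English description precedes it below -/
import Mathlib

section
/- Concentration of extreme bisections of the Poissonized Erdős–Rényi multigraph: fix γ > 0 and ε > 0. There exists a constant C = C(γ, ε) < ∞ such that for every even n, P( |mcut(G_n) − E[mcut(G_n)]| > nε ) ≤ C/n and P( |MCUT(G_n) − E[MCUT(G_n)]| > nε ) ≤ C/n. -/
open MeasureTheory Filter Finset

/-- The law of the i.i.d. Poisson(γ/n) multiplicities `(z_{ij})_{1≤i,j≤n}`. -/
noncomputable def poissonProd (n : ℕ) (γ : ℝ) : Measure ((Fin n × Fin n) → ℕ) :=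
  Measure.pi fun _ => ProbabilityTheory.poissonMeasure (Real.toNNReal (γ / n))

/-- `σ ∈ Ω_n`: the spin configuration is balanced (zero magnetization). -/
def balanced {n : ℕ} (σ : Fin n → Bool) : Prop :=
  2 * (Finset.univ.filter fun i => σ i = true).card = n

/-- Cut size of configuration `σ` in the multigraph with multiplicities `z`:
`Σ_{1≤i<j≤n} (z_{ij}+z_{ji})·1{σ_i ≠ σ_j}` (written as a sum over all ordered
pairs, the diagonal terms vanishing). -/
def cutZ {n : ℕ} (z : Fin n × Fin n → ℕ) (σ : Fin n → Bool) : ℕ :=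
  ∑ p : Fin n × Fin n, if σ p.1 ≠ σ p.2 then z p else 0

/-- Minimum bisection of the Poissonized multigraph. -/
noncomputable def mcutP {n : ℕ} (z : Fin n × Fin n → ℕ) : ℕ :=
  sInf {k : ℕ | ∃ σ : Fin n → Bool, balanced σ ∧ cutZ z σ = k}

/-- Maximum bisection of the Poissonized multigraph. -/
noncomputable def MCUTP {n : ℕ} (z : Fin n × Fin n → ℕ) : ℕ :=
  sSup {k : ℕ | ∃ σ : Fin n → Bool, balanced σ ∧ cutZ z σ = k}

open ProbabilityTheory Real
open scoped NNReal Nat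

/-!
Both extreme bisections are `1`-Lipschitz functions of the multiplicities `z` for the `ℓ¹`
distance: changing one `z_{ij}` by `d` changes every cut, hence the optimum, by at most `d`.
By the Efron–Stein inequality, which follows by induction on the number of coordinates from the
law of total variance for product measures, such a function of `n²` i.i.d. `Po(γ/n)` variables
has variance at most `n² · γ/n = γn`, so Chebyshev's inequality bounds the deviation probability
at scale `nε` by `γ / (ε² n)`.
-/

section PoissonMoments

variable (r : ℝ≥0)

/-- The Stein identity `E[N g(N)] = r E[g(N + 1)]` for `N ∼ Po(r)`, on the level of series. -/
lemma hasSum_poisson_mul_natCast_mul {g : ℕ → ℝ} {s : ℝ}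
    (h : HasSum (fun k => exp (-r) * r ^ k / k ! * g (k + 1)) s) :
    HasSum (fun n => exp (-r) * r ^ n / n ! * (n * g n)) (r * s) := by
  rw [← hasSum_nat_add_iff' 1, range_one, sum_singleton]
  simp only [CharP.cast_eq_zero, zero_mul, mul_zero, sub_zero]
  have hshift : (fun k : ℕ => exp (-r) * r ^ (k + 1) / (k + 1)! * (((k + 1 : ℕ) : ℝ) * g (k + 1)))
      = fun k => r * (exp (-r) * r ^ k / k ! * g (k + 1)) := by
    funext k
    rw [Nat.factorial_succ]
    push_cast
    field_simp
    ring
  rw [hshift]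
  exact h.mul_left _

lemma hasSum_poisson_mul_natCast :
    HasSum (fun n => exp (-r) * r ^ n / n ! * n) r := by
  have h := hasSum_poisson_mul_natCast_mul r (g := fun _ => 1)
    (by simpa only [mul_one] using hasSum_one_poissonMeasure r)
  simpa only [mul_one] using h

lemma hasSum_poisson_mul_natCast_sq :
    HasSum (fun n => exp (-r) * r ^ n / n ! * (n : ℝ) ^ 2) (r * (r + 1)) := by
  have h := (hasSum_poisson_mul_natCast r).add (hasSum_one_poissonMeasure r)
  simp only [← mul_add_one] at h
  simpa [sq] using hasSum_poisson_mul_natCast_mul r (g := fun n => (n : ℝ)) (by exact_mod_cast h)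

variable {r} {f : ℕ → ℝ} {s : ℝ}

lemma integrable_poissonMeasure_of_hasSum (hf : 0 ≤ f)
    (h : HasSum (fun n => exp (-r) * r ^ n / n ! * f n) s) : Integrable f Po(r) := by
  rw [integrable_poissonMeasure_iff]
  simpa [Real.norm_of_nonneg (hf _)] using h.summable

lemma integral_poissonMeasure_eq_of_hasSum (hf : 0 ≤ f)
    (h : HasSum (fun n => exp (-r) * r ^ n / n ! * f n) s) : ∫ n, f n ∂Po(r) = s :=
  (hasSum_integral_poissonMeasure (integrable_poissonMeasure_of_hasSum hf h)).unique
    (by simpa using h)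

variable (r)

lemma memLp_natCast_poissonMeasure : MemLp (fun n : ℕ => (n : ℝ)) 2 Po(r) :=
  (memLp_two_iff_integrable_sq (measurable_of_countable _).aestronglyMeasurable).2
    (integrable_poissonMeasure_of_hasSum (fun _ => by positivity)
      (hasSum_poisson_mul_natCast_sq r))

lemma variance_natCast_poissonMeasure : Var[fun n : ℕ => (n : ℝ); Po(r)] = r := by
  rw [variance_eq_sub (memLp_natCast_poissonMeasure r)]
  have h1 := integral_poissonMeasure_eq_of_hasSum (fun n => n.cast_nonneg)
    (hasSum_poisson_mul_natCast r)
  have h2 := integral_poissonMeasure_eq_of_hasSum (fun _ => by positivity)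
    (hasSum_poisson_mul_natCast_sq r)
  simp only [Pi.pow_apply] at h1 h2 ⊢
  rw [h1, h2]
  ring

end PoissonMoments

section Variance

variable {α β : Type*} [MeasurableSpace α] [MeasurableSpace β]

lemma memLp_two_of_abs_sub_le [Countable α] [MeasurableSingletonClass α] {μ : Measure α}
    [IsFiniteMeasure μ] {f G : α → ℝ} (hG : MemLp G 2 μ) (a₀ : α)
    (hf : ∀ a, |f a - f a₀| ≤ G a) : MemLp f 2 μ := by
  refine ((memLp_const |f a₀|).add hG).of_le (measurable_of_countable f).aestronglyMeasurable
    (ae_of_all _ fun a => ?_)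
  calc ‖f a‖ ≤ |f a₀| + G a := by
        linarith [Real.norm_eq_abs (f a), abs_sub_abs_le_abs_sub (f a) (f a₀), hf a]
    _ ≤ ‖|f a₀| + G a‖ := le_abs_self _

variable {μ : Measure α} [IsProbabilityMeasure μ]

lemma two_mul_variance_eq_integral_sub_sq {h : α → ℝ} (hh : MemLp h 2 μ) :
    2 * Var[h; μ] = ∫ p, (h p.1 - h p.2) ^ 2 ∂(μ.prod μ) := by
  have hD : MemLp (fun p : α × α => h p.1 - h p.2) 2 (μ.prod μ) :=
    (hh.comp_fst μ).sub (hh.comp_snd μ)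
  have hmean : ∫ p, (h p.1 - h p.2) ∂(μ.prod μ) = 0 := by
    rw [integral_sub ((hh.comp_fst μ).integrable one_le_two)
      ((hh.comp_snd μ).integrable one_le_two), integral_fun_fst, integral_fun_snd]
    simp
  have hsplit := variance_add_prod hh hh.neg
  simp only [Pi.neg_apply, ← sub_eq_add_neg, variance_neg] at hsplit
  rw [two_mul, ← hsplit, variance_eq_sub hD, hmean]
  simp

lemma variance_le_of_abs_sub_le {g h : α → ℝ} (hg : MemLp g 2 μ) (hh : MemLp h 2 μ)
    (hgh : ∀ a b, |g a - g b| ≤ |h a - h b|) : Var[g; μ] ≤ Var[h; μ] := by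
  suffices 2 * Var[g; μ] ≤ 2 * Var[h; μ] by linarith
  rw [two_mul_variance_eq_integral_sub_sq hg, two_mul_variance_eq_integral_sub_sq hh]
  refine integral_mono_of_nonneg (ae_of_all _ fun _ => sq_nonneg _)
    ((hh.comp_fst μ).sub (hh.comp_snd μ)).integrable_sq (ae_of_all _ fun p => ?_)
  simpa only [sq_abs] using pow_le_pow_left₀ (abs_nonneg _) (hgh p.1 p.2) 2

lemma variance_prod_eq {ν : Measure β} [IsProbabilityMeasure ν] {F : α × β → ℝ}
    (hF : MemLp F 2 (μ.prod ν)) (hsec : ∀ x, MemLp (fun y => F (x, y)) 2 ν)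
    (hmean : MemLp (fun x => ∫ y, F (x, y) ∂ν) 2 μ) :
    Var[F; μ.prod ν]
      = ∫ x, Var[fun y => F (x, y); ν] ∂μ + Var[fun x => ∫ y, F (x, y) ∂ν; μ] := by
  simp only [variance_eq_sub hF, variance_eq_sub hmean, variance_eq_sub (hsec _), Pi.pow_apply]
  rw [integral_sub hF.integrable_sq.integral_prod_left hmean.integrable_sq,
    integral_prod _ hF.integrable_sq, integral_prod _ (hF.integrable one_le_two)]
  ring

end Variance

def IsL1Lipschitz {ι : Type*} [Fintype ι] (f : (ι → ℕ) → ℝ) : Prop :=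
  ∀ z w, |f z - f w| ≤ ∑ i, |(z i : ℝ) - w i|

namespace IsL1Lipschitz

variable {ι : Type*} [Fintype ι] {f : (ι → ℕ) → ℝ}

lemma of_le_add (h : ∀ z w, f z ≤ f w + ∑ i, |(z i : ℝ) - w i|) : IsL1Lipschitz f := by
  intro z w
  have hsymm : ∑ i, |(w i : ℝ) - z i| = ∑ i, |(z i : ℝ) - w i| :=
    sum_congr rfl fun i _ => abs_sub_comm _ _
  exact abs_sub_le_iff.2 ⟨by linarith [h z w], by linarith [h w z]⟩

variable {ν : Measure ℕ} [IsProbabilityMeasure ν]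

lemma memLp (hf : IsL1Lipschitz f) (hν : MemLp (fun a : ℕ => (a : ℝ)) 2 ν) :
    MemLp f 2 (Measure.pi fun _ : ι => ν) :=
  memLp_two_of_abs_sub_le (G := fun z => ∑ i, (z i : ℝ))
    (memLp_finsetSum _ fun i _ => hν.comp_measurePreserving (measurePreserving_eval _ i)) 0
    fun z => by simpa using hf z 0

theorem variance_pi_fin_le (hν : MemLp (fun a : ℕ => (a : ℝ)) 2 ν) {m : ℕ}
    {f : (Fin m → ℕ) → ℝ} (hf : IsL1Lipschitz f) :
    Var[f; Measure.pi fun _ => ν] ≤ m * Var[fun a : ℕ => (a : ℝ); ν] := by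
  induction m with
  | zero =>
    rw [Measure.pi_of_empty (x := isEmptyElim), variance_dirac]
    simp
  | succ m ih =>
    set V := Var[fun a : ℕ => (a : ℝ); ν]
    have he := measurePreserving_piFinSuccAbove (fun _ : Fin (m + 1) => ν) 0
    set e := MeasurableEquiv.piFinSuccAbove (fun _ : Fin (m + 1) => ℕ) 0
    set F : ℕ × (Fin m → ℕ) → ℝ := f ∘ e.symm
    have hF : ∀ x y, F (x, y) = f (Fin.cons x y) := fun x y => by
      simp [F, e, MeasurableEquiv.piFinSuccAbove_symm_apply, Fin.insertNthEquiv]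
    have hsec : ∀ x, IsL1Lipschitz fun y => F (x, y) := fun x y y' => by
      simpa [hF, Fin.sum_univ_succ] using hf (Fin.cons x y) (Fin.cons x y')
    set μm := Measure.pi fun _ : Fin m => ν
    set g : ℕ → ℝ := fun x => ∫ y, F (x, y) ∂μm
    have hg : ∀ a b : ℕ, |g a - g b| ≤ |(a : ℝ) - b| := fun a b => by
      rw [← integral_sub ((hsec a).memLp hν |>.integrable one_le_two)
        ((hsec b).memLp hν |>.integrable one_le_two)]
      simpa using norm_integral_le_of_norm_le_const (μ := μm) (C := |(a : ℝ) - b|)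
        (f := fun y => F (a, y) - F (b, y)) (ae_of_all _ fun y => by
          simpa [hF, Fin.sum_univ_succ] using hf (Fin.cons a y) (Fin.cons b y))
    have hgL2 : MemLp g 2 ν := memLp_two_of_abs_sub_le hν 0 fun a => by simpa using hg a 0
    have hvar : Var[f; Measure.pi fun _ => ν] = Var[F; ν.prod μm] := by
      simpa [F] using he.variance_fun_comp (f := F) (measurable_of_countable F).aemeasurable
    rw [hvar, variance_prod_eq ((hf.memLp hν).comp_measurePreserving he.symm)
      (fun x => (hsec x).memLp hν) hgL2]
    calc _ ≤ ∫ _, m * V ∂ν + V :=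
          add_le_add (integral_mono_of_nonneg (ae_of_all _ fun _ => variance_nonneg _ _)
            (integrable_const _) (ae_of_all _ fun x => ih (hsec x)))
            (variance_le_of_abs_sub_le hgL2 hν hg)
      _ = (m + 1 : ℕ) * V := by
          rw [integral_const, probReal_univ, one_smul]
          push_cast
          ring

theorem variance_pi_le (hν : MemLp (fun a : ℕ => (a : ℝ)) 2 ν) (hf : IsL1Lipschitz f) :
    Var[f; Measure.pi fun _ : ι => ν] ≤ Fintype.card ι * Var[fun a : ℕ => (a : ℝ); ν] := by
  set e := (Fintype.equivFin ι).symm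
  have he := measurePreserving_piCongrLeft (fun _ : ι => ν) e
  have hE : ∀ u i, MeasurableEquiv.piCongrLeft (fun _ : ι => ℕ) e u (e i) = u i := fun u i =>
    MeasurableEquiv.piCongrLeft_apply_apply (β := fun _ : ι => ℕ) e u i
  have hfe : IsL1Lipschitz (f ∘ MeasurableEquiv.piCongrLeft (fun _ : ι => ℕ) e) := fun u v => by
    simpa [← e.sum_comp, hE] using
      hf (MeasurableEquiv.piCongrLeft _ e u) (MeasurableEquiv.piCongrLeft _ e v)
  rw [← he.variance_fun_comp (measurable_of_countable f).aemeasurable]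
  exact variance_pi_fin_le hν hfe

end IsL1Lipschitz

section Bisections

variable {n : ℕ}

lemma cutZ_le_add_sum_abs_sub (z w : Fin n × Fin n → ℕ) (σ : Fin n → Bool) :
    (cutZ z σ : ℝ) ≤ cutZ w σ + ∑ p, |(z p : ℝ) - w p| := by
  simp only [cutZ, Nat.cast_sum, Nat.cast_ite, Nat.cast_zero, ← sum_add_distrib]
  refine sum_le_sum fun p _ => ?_
  split_ifs
  · linarith [le_abs_self ((z p : ℝ) - w p)]
  · linarith [abs_nonneg ((z p : ℝ) - w p)]

lemma exists_balanced (hn : Even n) : ∃ σ : Fin n → Bool, balanced σ := by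
  obtain ⟨t, -, ht⟩ := exists_subset_card_eq (s := (univ : Finset (Fin n))) (n := n / 2)
    (by simpa using Nat.div_le_self n 2)
  refine ⟨fun i => decide (i ∈ t), ?_⟩
  simp only [balanced, decide_eq_true_eq, filter_mem_eq_inter, univ_inter, ht]
  exact Nat.two_mul_div_two_of_even hn

lemma cuts_nonempty (hn : Even n) (z : Fin n × Fin n → ℕ) :
    {k : ℕ | ∃ σ : Fin n → Bool, balanced σ ∧ cutZ z σ = k}.Nonempty :=
  let ⟨σ, hσ⟩ := exists_balanced hn
  ⟨cutZ z σ, σ, hσ, rfl⟩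

lemma cuts_bddAbove (z : Fin n × Fin n → ℕ) :
    BddAbove {k : ℕ | ∃ σ : Fin n → Bool, balanced σ ∧ cutZ z σ = k} :=
  ((Set.finite_range (cutZ z)).subset (by rintro _ ⟨σ, -, rfl⟩; exact ⟨σ, rfl⟩)).bddAbove

lemma isL1Lipschitz_mcutP (hn : Even n) :
    IsL1Lipschitz fun z : Fin n × Fin n → ℕ => (mcutP z : ℝ) :=
  IsL1Lipschitz.of_le_add fun z w => by
    obtain ⟨σ, hσ, hw⟩ := Nat.sInf_mem (cuts_nonempty hn w)
    calc (mcutP z : ℝ) ≤ cutZ z σ := Nat.cast_le.2 (Nat.sInf_le ⟨σ, hσ, rfl⟩)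
      _ ≤ cutZ w σ + _ := cutZ_le_add_sum_abs_sub z w σ
      _ = mcutP w + _ := by rw [hw]; rfl

lemma isL1Lipschitz_MCUTP (hn : Even n) :
    IsL1Lipschitz fun z : Fin n × Fin n → ℕ => (MCUTP z : ℝ) :=
  IsL1Lipschitz.of_le_add fun z w => by
    obtain ⟨σ, hσ, hz⟩ := Nat.sSup_mem (cuts_nonempty hn z) (cuts_bddAbove z)
    calc (MCUTP z : ℝ) = cutZ z σ := by rw [hz]; rfl
      _ ≤ cutZ w σ + _ := cutZ_le_add_sum_abs_sub z w σ
      _ ≤ MCUTP w + _ := by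
        gcongr
        exact_mod_cast le_csSup (cuts_bddAbove w) ⟨σ, hσ, rfl⟩

end Bisections

section Concentration

variable {n : ℕ} {γ ε : ℝ}

instance : IsProbabilityMeasure (poissonProd n γ) := by
  unfold poissonProd
  infer_instance

lemma variance_poissonProd_le (hγ : 0 ≤ γ) {X : (Fin n × Fin n → ℕ) → ℝ}
    (hX : IsL1Lipschitz X) : Var[X; poissonProd n γ] ≤ n * γ := by
  calc Var[X; poissonProd n γ]
      ≤ Fintype.card (Fin n × Fin n) * Var[fun a : ℕ => (a : ℝ); Po((γ / n).toNNReal)] :=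
        hX.variance_pi_le (memLp_natCast_poissonMeasure _)
    _ = n * γ := by
      rw [variance_natCast_poissonMeasure, Real.coe_toNNReal _ (by positivity), Fintype.card_prod,
        Fintype.card_fin, Nat.cast_mul]
      rcases eq_or_ne (n : ℝ) 0 with hn | hn
      · simp [hn]
      · field_simp

lemma poissonProd_deviation_le (hγ : 0 ≤ γ) (hε : 0 < ε) {X : (Fin n × Fin n → ℕ) → ℝ}
    (hX : IsL1Lipschitz X) :
    ((poissonProd n γ) {z | |X z - ∫ w, X w ∂(poissonProd n γ)| > n * ε}).toReal
      ≤ γ / ε ^ 2 / n := by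
  rcases n.eq_zero_or_pos with rfl | hn
  -- the bound is `γ / ε ^ 2 / 0 = 0`, but the sample space is a single point
  · have hconst : ∀ z, X z = ∫ w, X w ∂(poissonProd 0 γ) := fun z => by
      rw [show X = fun _ => X z from funext fun w => congrArg X (Subsingleton.elim w z),
        integral_const]
      simp
    have hempty : {z | |X z - ∫ w, X w ∂(poissonProd 0 γ)| > (0 : ℕ) * ε} = ∅ :=
      Set.eq_empty_of_forall_notMem fun z hz => by simp [← hconst z] at hz
    rw [hempty, measure_empty, ENNReal.toReal_zero, Nat.cast_zero, div_zero]
  calc ((poissonProd n γ) {z | |X z - ∫ w, X w ∂(poissonProd n γ)| > n * ε}).toReal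
      ≤ (ENNReal.ofReal (Var[X; poissonProd n γ] / (n * ε) ^ 2)).toReal :=
        ENNReal.toReal_mono ENNReal.ofReal_ne_top <|
          (measure_mono (Set.ofPred_subset_ofPred.2 fun _ => le_of_lt)).trans
          (meas_ge_le_variance_div_sq (hX.memLp (memLp_natCast_poissonMeasure _))
            (mul_pos (Nat.cast_pos.2 hn) hε))
    _ = Var[X; poissonProd n γ] / (n * ε) ^ 2 :=
        ENNReal.toReal_ofReal (div_nonneg (variance_nonneg _ _) (by positivity))
    _ ≤ n * γ / (n * ε) ^ 2 := by gcongr; exact variance_poissonProd_le hγ hX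
    _ = γ / ε ^ 2 / n := by field_simp

end Concentration

/-- **Concentration of extreme bisections of the Poissonized Erdős–Rényi
multigraph.** Fix `γ > 0` and `ε > 0`. There is `C = C(γ,ε) < ∞` such that
for every even `n`,
`P(|mcut(G_n) − E mcut(G_n)| > nε) ≤ C/n` and
`P(|MCUT(G_n) − E MCUT(G_n)| > nε) ≤ C/n`. -/
theorem concentration_extreme_bisections (γ ε : ℝ) (hγ : 0 < γ) (hε : 0 < ε) :
    ∃ C : ℝ, ∀ n : ℕ, Even n →
      ((poissonProd n γ)
          {z | |(mcutP z : ℝ) - ∫ w, (mcutP w : ℝ) ∂(poissonProd n γ)|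
            > n * ε}).toReal ≤ C / n
      ∧ ((poissonProd n γ)
          {z | |(MCUTP z : ℝ) - ∫ w, (MCUTP w : ℝ) ∂(poissonProd n γ)|
            > n * ε}).toReal ≤ C / n := by
  refine ⟨γ / ε ^ 2, fun n hn => ⟨?_, ?_⟩⟩
  · exact poissonProd_deviation_le hγ.le hε (isL1Lipschitz_mcutP hn)
  · exact poissonProd_deviation_le hγ.le hε (isL1Lipschitz_MCUTP hn)
end

section
/- Poisson differentiation identity: let f : ℕ → ℝ be bounded and for λ > 0 set g(λ) = E[f(Z_λ)] where Z_λ is a Poisson random variable with mean λ, i.e. g(λ) = Σ_{k=0}^∞ f(k) e^{−λ} λ^k / k!. Then g is differentiable on (0,∞) and g′(λ) = E[f(Z_λ + 1)] − E[f(Z_λ)] for every λ > 0. -/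
/-! Writing `E[f(Z_λ)] = e^{-λ} h(λ)` with `h(λ) = Σ f(k) λ^k / k!`, the series `h` is dominated
by `M e^{|λ|}`, and differentiating it term by term shifts the coefficients:
`h'(λ) = Σ f(k+1) λ^k / k!`. The product rule then gives `e^{-λ} h'(λ) - e^{-λ} h(λ)`. -/

open Real Nat

section BoundedCoefficients

variable {a : ℕ → ℝ} {M : ℝ}

lemma summable_mul_pow_div_factorial (ha : ∀ k, |a k| ≤ M) (x : ℝ) :
    Summable fun k => a k * (x ^ k / k !) := by
  refine .of_norm_bounded ((summable_pow_div_factorial |x|).mul_left M) fun k => ?_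
  rw [norm_mul, norm_div, norm_pow, RCLike.norm_natCast, Real.norm_eq_abs]
  exact mul_le_mul_of_nonneg_right (ha k) (by positivity)

lemma hasDerivAt_pow_succ_div_factorial_succ (k : ℕ) (x : ℝ) :
    HasDerivAt (fun x : ℝ => x ^ (k + 1) / (k + 1)!) (x ^ k / k !) x := by
  refine ((hasDerivAt_pow (k + 1) x).div_const ((k + 1)! : ℝ)).congr_deriv ?_
  rw [factorial_succ]
  push_cast
  field_simp

lemma hasDerivAt_tsum_mul_pow_div_factorial (ha : ∀ k, |a k| ≤ M) (x : ℝ) :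
    HasDerivAt (fun x => ∑' k, a k * (x ^ k / k !)) (∑' k, a (k + 1) * (x ^ k / k !)) x := by
  have hshift : (fun x => ∑' k, a k * (x ^ k / k !)) =
      fun x => a 0 + ∑' k, a (k + 1) * (x ^ (k + 1) / (k + 1)!) := by
    ext x
    simp [(summable_mul_pow_div_factorial ha x).tsum_eq_zero_add]
  rw [hshift]
  set r := |x| + 1
  refine .const_add _ <| hasDerivAt_tsum_of_isPreconnected
    ((summable_pow_div_factorial r).mul_left M) Metric.isOpen_ball
    (convex_ball 0 r).isPreconnected
    (fun k y _ => (hasDerivAt_pow_succ_div_factorial_succ k y).const_mul (a (k + 1)))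
    (fun k y hy => ?_) (Metric.mem_ball_self (by positivity))
    ((summable_nat_add_iff 1).2 (summable_mul_pow_div_factorial ha 0))
    (by simp [r])
  rw [mem_ball_zero_iff, Real.norm_eq_abs] at hy
  rw [norm_mul, norm_div, norm_pow, RCLike.norm_natCast, Real.norm_eq_abs, Real.norm_eq_abs]
  gcongr
  · exact (abs_nonneg _).trans (ha 0)
  · exact ha _

end BoundedCoefficients

/-- **Poisson differentiation identity.** Let `f : ℕ → ℝ` be bounded and, for
`λ > 0`, set `g(λ) = E[f(Z_λ)] = Σ_{k} f(k) e^{−λ} λ^k / k!` where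
`Z_λ ~ Poisson(λ)`. Then `g` is differentiable on `(0,∞)` with
`g′(λ) = E[f(Z_λ + 1)] − E[f(Z_λ)]`. -/
theorem poisson_diff_identity (f : ℕ → ℝ) (M : ℝ) (hf : ∀ k, |f k| ≤ M) :
    ∀ l : ℝ, 0 < l →
      HasDerivAt
        (fun l : ℝ => ∑' k : ℕ, f k * (Real.exp (-l) * l ^ k / (Nat.factorial k)))
        ((∑' k : ℕ, f (k + 1) * (Real.exp (-l) * l ^ k / (Nat.factorial k)))
          - ∑' k : ℕ, f k * (Real.exp (-l) * l ^ k / (Nat.factorial k))) l := by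
  intro l _
  have hfactor : ∀ (c : ℕ → ℝ) (x : ℝ),
      ∑' k, c k * (exp (-x) * x ^ k / k !) = exp (-x) * ∑' k, c k * (x ^ k / k !) := by
    intro c x
    rw [← tsum_mul_left]
    congr 1 with k
    ring
  simp only [hfactor]
  have hexp : HasDerivAt (fun x => exp (-x)) (-exp (-l)) l := by
    simpa using (hasDerivAt_neg l).exp
  refine (hexp.mul (hasDerivAt_tsum_mul_pow_div_factorial hf l)).congr_deriv ?_
  ring
end

section
/- Pairing identity: for all natural numbers m ≤ ℓ, Σ_{s=0}^{m} 4^s · (m+ℓ)! / ( (m−s)! · (ℓ−s)! · (2s)! ) = C(2m+2ℓ, 2ℓ), where C(·,·) is the binomial coefficient. (Equivalently, Σ_{s=0}^m 2^{2s} · multinomial(m+ℓ; m−s, ℓ−s, 2s) = C(2(m+ℓ), 2ℓ).) -/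
/-!
Write `n = m + ℓ`. Since `(X + 1) ^ 2 = 2X + (X ^ 2 + 1)`, the binomial theorem gives
`(X + 1) ^ (2n) = ∑ₖ C(n, k) (2X) ^ k (X ^ 2 + 1) ^ (n - k)`, and the coefficient of
`X ^ (2ℓ)` on the right only receives contributions from even `k = 2s`, namely
`4 ^ s C(n, 2s) C(n - 2s, ℓ - s) = 4 ^ s n! / ((m - s)! (ℓ - s)! (2s)!)`.
Combinatorially: choosing `2ℓ` of the `2n` balls arranged in `n` pairs amounts to choosing the
`2s` pairs that contribute one ball (in `2` ways each), the `ℓ - s` that contribute both and the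
`m - s` that contribute none.
-/

open Polynomial Finset

theorem Nat.factorial_add_add_div_eq_choose_mul_choose (a b c : ℕ) :
    (a + b + c).factorial / (a.factorial * b.factorial * c.factorial)
      = (a + b + c).choose c * (a + b).choose b := by
  refine Nat.div_eq_of_eq_mul_left (by positivity) ?_
  rw [← Nat.add_choose_mul_factorial_mul_factorial (a + b) c,
    ← Nat.add_choose_mul_factorial_mul_factorial a b]
  ring

theorem Nat.choose_two_mul_eq_sum (n j : ℕ) :
    (2 * n).choose j = ∑ k ∈ range (n + 1),
      if k ≤ j ∧ 2 ∣ j - k then 2 ^ k * n.choose k * (n - k).choose ((j - k) / 2) else 0 := by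
  have hsq : (X + 1 : ℕ[X]) ^ (2 * n) = (C 2 * X + expand ℕ 2 (X + 1)) ^ n := by
    rw [pow_mul]
    simp only [eq_natCast, cast_ofNat, map_add, expand_X, map_one]
    ring
  rw [← Nat.cast_id ((2 * n).choose j), ← coeff_X_add_one_pow, hsq, add_pow, finsetSum_coeff]
  refine sum_congr rfl fun k _ => ?_
  rw [mul_pow, ← map_pow, ← map_pow, ← C_eq_natCast, mul_comm, ← mul_assoc, ← mul_assoc,
    ← map_mul, mul_assoc, coeff_C_mul, coeff_X_pow_mul', coeff_expand two_pos,
    coeff_X_add_one_pow, ite_and]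
  split_ifs <;> simp [mul_comm]

/-- **Pairing identity.** For all natural numbers `m ≤ ℓ`,
`Σ_{s=0}^{m} 4^s · (m+ℓ)! / ((m−s)!·(ℓ−s)!·(2s)!) = C(2m+2ℓ, 2ℓ)`.
(Each summand is `2^{2s}` times the multinomial coefficient
`multinomial(m+ℓ; m−s, ℓ−s, 2s)`, and all the divisions are exact.) -/
theorem pairing_identity (m ℓ : ℕ) (h : m ≤ ℓ) :
    ∑ s ∈ Finset.range (m + 1),
        4 ^ s * ((m + ℓ).factorial /
          ((m - s).factorial * (ℓ - s).factorial * (2 * s).factorial))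
      = Nat.choose (2 * m + 2 * ℓ) (2 * ℓ) := by
  rw [show 2 * m + 2 * ℓ = 2 * (m + ℓ) by ring, Nat.choose_two_mul_eq_sum]
  refine sum_of_injOn (2 * ·) (mul_right_injective₀ two_ne_zero).injOn
    (fun s hs => by simp only [coe_range, Set.mem_Iio] at hs ⊢; omega) ?_ ?_
  · intro k hk hk_notin
    rw [ite_eq_right_iff]
    rintro ⟨hkℓ, t, ht⟩
    have hkm : m < k / 2 := by
      by_contra! hkm
      exact hk_notin ⟨k / 2, by simp only [coe_range, Set.mem_Iio]; omega, by dsimp only; omega⟩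
    -- `k = 2s` with `s > m`, so `ℓ - s > m + ℓ - 2s`
    rw [Nat.choose_eq_zero_of_lt (n := m + ℓ - k) (by rw [mem_range] at hk; omega), mul_zero]
  · intro s hs
    have hs : s ≤ m := Nat.lt_succ_iff.mp (mem_range.mp hs)
    have hsum : m + ℓ = (m - s) + (ℓ - s) + 2 * s := by omega
    rw [if_pos ⟨by omega, by omega⟩, hsum, Nat.factorial_add_add_div_eq_choose_mul_choose,
      ← hsum, show m + ℓ - 2 * s = m - s + (ℓ - s) by omega,
      show (2 * ℓ - 2 * s) / 2 = ℓ - s by omega, pow_mul]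
    ring
end
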